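/- arXiv:math/0403403 — 2 statements merged into one kernel-verified Lean document; each statement's English description precedes it below -/
import Mathlib

section
/- Let k be a positive integer, T a subset of {1,...,k}, and ρ a permutation of {1,...,k} that is order-preserving on T (i.e., for all i, j ∈ T with i < j one has ρ(i) < ρ(j)). Then ρ can be written as a product of adjacent transpositions ρ = t₁ ∘ t₂ ∘ ⋯ ∘ tₘ (each tₙ transposing two consecutive integers) such that for each 1 ≤ n ≤ m, the transposition tₙ does not transpose two elements of the set tₙ₊₁ ∘ ⋯ ∘ tₘ (T) (the image of T under the composite of the later transpositions). -/
/-!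
Induction on the number of inversions of `ρ`. If `ρ ≠ 1`, some adjacent pair `a ⋖ b` occurs in
reversed order, `ρ⁻¹ b < ρ⁻¹ a`; as `ρ` is order-preserving on `T`, `a` and `b` are not both in
`ρ(T)`. Hence `ρ' = swap a b * ρ` is still order-preserving on `T` and has fewer inversions,
and `ρ = swap a b * ρ'` where `swap a b` does not transpose two points of `ρ'(T) = swap a b (ρ(T))`.
-/

namespace Equiv.Perm

variable {α : Type*} [LinearOrder α]

theorem swap_apply_lt_swap_apply_of_covBy {a b x y : α} (hab : a ⋖ b) (hxy : x < y)
    (hxy_ab : ¬(x = a ∧ y = b)) : swap a b x < swap a b y := by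
  have hy : a < y → b ≤ y := hab.ge_of_gt
  have hx : x < b → x ≤ a := hab.le_of_lt
  have := hab.lt
  rw [swap_apply_def, swap_apply_def]
  split_ifs <;> grind

theorem _root_.StrictMonoOn.swap_mul {σ : Perm α} {s : Set α} {a b : α}
    (hσ : StrictMonoOn σ s) (hab : a ⋖ b) (hs : ¬(a ∈ σ '' s ∧ b ∈ σ '' s)) :
    StrictMonoOn (swap a b * σ) s := fun i hi j hj hij =>
  swap_apply_lt_swap_apply_of_covBy hab (hσ hi hj hij) fun ⟨hia, hjb⟩ =>
    hs ⟨⟨i, hi, hia⟩, ⟨j, hj, hjb⟩⟩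

theorem exists_covBy_symm_apply_lt [LocallyFiniteOrder α] [WellFoundedLT α] {σ : Perm α}
    (hσ : σ ≠ 1) : ∃ a b, a ⋖ b ∧ σ.symm b < σ.symm a := by
  by_contra! h
  have hmono : StrictMono σ.symm := (strictMono_iff_forall_covBy _).2 fun a b hab =>
    (h a b hab).lt_of_ne (σ.symm.injective.ne hab.ne)
  have : hmono.orderIsoOfSurjective _ σ.symm.surjective = OrderIso.refl α := Subsingleton.elim _ _
  exact hσ (Equiv.ext fun x => by simpa using (DFunLike.congr_fun this (σ x)).symm)

variable [Fintype α]

def inversions (σ : Perm α) : Finset (α × α) := {p | p.1 < p.2 ∧ σ p.2 < σ p.1}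

@[simp]
theorem mem_inversions {σ : Perm α} {p : α × α} :
    p ∈ σ.inversions ↔ p.1 < p.2 ∧ σ p.2 < σ p.1 := by
  simp [inversions]

theorem inversions_swap_mul_ssubset {σ : Perm α} {a b : α} (hab : a ⋖ b)
    (h : σ.symm b < σ.symm a) : (swap a b * σ).inversions ⊂ σ.inversions := by
  refine (Finset.ssubset_iff_of_subset ?_).2 ⟨(σ.symm b, σ.symm a), ?_, ?_⟩
  · simp only [Finset.subset_iff, mem_inversions, mul_apply]
    rintro ⟨i, j⟩ ⟨hij, hswap⟩
    refine ⟨hij, lt_of_not_ge fun hle => ?_⟩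
    have hlt : σ i < σ j := hle.lt_of_ne (σ.injective.ne hij.ne)
    refine hswap.not_gt (swap_apply_lt_swap_apply_of_covBy hab hlt ?_)
    rintro ⟨rfl, rfl⟩
    simp only [symm_apply_apply] at h
    exact h.not_gt hij
  · simp [h, hab.lt]
  · simp [hab.lt.le]

end Equiv.Perm

open Equiv Perm in
/-- If `ρ ∈ Σ_k` is order-preserving on a subset `T ⊆ {1,…,k}`, then `ρ` can be written as a
product of adjacent transpositions `ρ = t₁ ∘ t₂ ∘ ⋯ ∘ tₘ` such that for each `n`, the
transposition `tₙ` does not transpose two elements of the image of `T` under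
`tₙ₊₁ ∘ ⋯ ∘ tₘ`. -/
theorem exists_adjacent_transposition_factorization {k : ℕ} (T : Set (Fin k))
    (ρ : Equiv.Perm (Fin k))
    (hρ : ∀ i j, i ∈ T → j ∈ T → i < j → ρ i < ρ j) :
    ∃ L : List (Equiv.Perm (Fin k)),
      ρ = L.prod ∧
      ∀ (n : ℕ) (hn : n < L.length),
        ∃ (a b : Fin k), (a : ℕ) + 1 = (b : ℕ) ∧
          L.get ⟨n, hn⟩ = Equiv.swap a b ∧
          ¬(a ∈ ⇑(L.drop (n + 1)).prod '' T ∧ b ∈ ⇑(L.drop (n + 1)).prod '' T) := by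
  replace hρ : StrictMonoOn ρ T := fun i hi j hj => hρ i j hi hj
  induction h : ρ.inversions.card using Nat.strong_induction_on generalizing ρ with
  | _ N ih =>
    rcases eq_or_ne ρ 1 with rfl | hne
    · exact ⟨[], rfl, by simp⟩
    obtain ⟨a, b, hab, hd⟩ := exists_covBy_symm_apply_lt hne
    have hT : ¬(a ∈ ρ '' T ∧ b ∈ ρ '' T) := by
      rintro ⟨⟨i, hi, rfl⟩, ⟨j, hj, rfl⟩⟩
      simp only [symm_apply_apply] at hd
      exact (hρ hj hi hd).not_gt hab.lt
    obtain ⟨L, hL, hLT⟩ := ih _ (h ▸ Finset.card_lt_card (inversions_swap_mul_ssubset hab hd))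
      (swap a b * ρ) (hρ.swap_mul hab hT) rfl
    refine ⟨swap a b :: L, by simp [← hL, ← mul_assoc], ?_⟩
    rintro (_ | n) hn
    · refine ⟨a, b, by simpa using hab, rfl, ?_⟩
      rw [List.drop_succ_cons, List.drop_zero, ← hL, Set.mem_image_equiv, Set.mem_image_equiv]
      simpa [Perm.mul_def, and_comm] using hT
    · simpa using hLT n (by simpa using hn)
end

section
/- The block-permutation multiproduct on symmetric groups is multiassociative: for σ ∈ Σ_k, permutations φ_s ∈ Σ_{j_s} for 1 ≤ s ≤ k, and permutations ψ_{s,q} ∈ Σ_{i_{s,q}} for 1 ≤ q ≤ j_s, one has Γ(Γ(σ; φ₁,...,φ_k); ψ_{1,1},...,ψ_{k,j_k}) = Γ(σ; Γ(φ₁; ψ_{1,1},...,ψ_{1,j₁}),...,Γ(φ_k; ψ_{k,1},...,ψ_{k,j_k})), where in the left-hand side the ψ's are listed in lexicographic order of (s,q). -/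
open Equiv

/-- The lexicographic equivalence between a sigma of `Fin`s over `Fin (n+1)` and a sum. -/
def sigmaFinSucc {n : ℕ} (j : Fin (n + 1) → ℕ) :
    (Σ i : Fin (n + 1), Fin (j i)) ≃ (Fin (j 0) ⊕ Σ i : Fin n, Fin (j i.succ)) where
  toFun x := Fin.cases (motive := fun i => Fin (j i) → (Fin (j 0) ⊕ Σ i : Fin n, Fin (j i.succ)))
    (fun b => Sum.inl b) (fun i b => Sum.inr ⟨i, b⟩) x.1 x.2
  invFun s := Sum.elim (fun b => ⟨0, b⟩) (fun x => ⟨x.1.succ, x.2⟩) s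
  left_inv := by
    rintro ⟨i, b⟩
    induction i using Fin.cases <;> simp
  right_inv := by
    rintro (b | ⟨i, b⟩) <;> simp

/-- The lexicographic equivalence `(Σ i : Fin k, Fin (j i)) ≃ Fin (∑ i, j i)`:
the pair `⟨i, b⟩` corresponds to `j 0 + ⋯ + j (i-1) + b`. -/
def sigmaFin : ∀ {k : ℕ} (j : Fin k → ℕ), (Σ i, Fin (j i)) ≃ Fin (∑ i, j i)
  | 0, j => (Equiv.equivOfIsEmpty _ (Fin 0)).trans (finCongr (by simp))
  | k + 1, j =>
    (sigmaFinSucc j).trans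
      (((Equiv.refl (Fin (j 0))).sumCongr (sigmaFin (fun i => j i.succ))).trans
        (finSumFinEquiv.trans (finCongr (Fin.sum_univ_succ j).symm)))

/-- The block sum `φ₁ ⊕ ⋯ ⊕ φ_k`, acting by `φ i` on the `i`-th consecutive block. -/
def blockSum {k : ℕ} (j : Fin k → ℕ) (φ : ∀ i, Equiv.Perm (Fin (j i))) :
    Equiv.Perm (Fin (∑ i, j i)) :=
  ((sigmaFin j).symm.trans (Equiv.sigmaCongrRight φ)).trans (sigmaFin j)

/-- The block permutation `σ⟨j₁,…,j_k⟩`, sending the `i`-th consecutive block (of size `j i`)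
order-preservingly onto the `σ i`-th block in the decomposition with sizes `j ∘ σ⁻¹`. -/
def blockPerm {k : ℕ} (σ : Equiv.Perm (Fin k)) (j : Fin k → ℕ) :
    Equiv.Perm (Fin (∑ i, j i)) :=
  ((sigmaFin j).symm.trans
      ((Equiv.sigmaCongr σ (fun i => finCongr (by simp))).trans
        (sigmaFin (fun i => j (σ.symm i))))).trans
    (finCongr (Equiv.sum_comp σ.symm j))

/-- The operad multiproduct `Γ(σ; φ₁,…,φ_k) = σ⟨j₁,…,j_k⟩ ∘ (φ₁ ⊕ ⋯ ⊕ φ_k)`. -/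
def Gam {k : ℕ} (σ : Equiv.Perm (Fin k)) (j : Fin k → ℕ) (φ : ∀ i, Equiv.Perm (Fin (j i))) :
    Equiv.Perm (Fin (∑ i, j i)) :=
  (blockSum j φ).trans (blockPerm σ j)
open Finset in
lemma sigmaFin_val : ∀ {k : ℕ} (j : Fin k → ℕ) (x : Σ i, Fin (j i)),
    ((sigmaFin j x : Fin (∑ i, j i)) : ℕ)
      = ∑ t ∈ Finset.filter (fun t => t < x.1) Finset.univ, j t + x.2.val := by
  intro k
  induction k with
  | zero => intro j x; exact x.1.elim0
  | succ n ih =>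
    rintro j ⟨i, b⟩
    induction i using Fin.cases with
    | zero =>
      simp [sigmaFin, sigmaFinSucc]
    | succ m =>
      simp [sigmaFin, sigmaFinSucc, ih, Finset.sum_filter, Fin.sum_univ_succ,
        Fin.succ_lt_succ_iff, Fin.succ_pos]
      ring
open Finset in
lemma lex_lt {k : ℕ} (j : Fin k → ℕ) (r s : Fin k) (b c : ℕ) (hb : b < j r) (hc : c < j s) :
    ((∑ t ∈ filter (fun t => t < r) univ, j t) + b < (∑ t ∈ filter (fun t => t < s) univ, j t) + c)
      ↔ (r < s ∨ (r = s ∧ b < c)) := by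
  have key : ∀ r s : Fin k, r < s →
      (∑ t ∈ filter (fun t => t < r) univ, j t) + j r ≤ ∑ t ∈ filter (fun t => t < s) univ, j t := by
    intro r s h
    rw [add_comm, ← Finset.sum_insert (by simp)]
    apply Finset.sum_le_sum_of_subset
    intro t ht
    simp only [Finset.mem_insert, Finset.mem_filter, Finset.mem_univ, true_and] at *
    rcases ht with rfl | ht
    · exact h
    · exact lt_trans ht h
  rcases lt_trichotomy r s with h | h | h
  · have := key r s h
    simp only [h, true_or, iff_true]
    omega
  · subst h
    simp only [lt_irrefl, false_or, true_and]
    omega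
  · have := key s r h
    have h1 : ¬ r < s := not_lt_of_gt h
    have h2 : r ≠ s := ne_of_gt h
    simp only [h1, h2, false_and, or_false, iff_false, not_lt]
    omega

open Finset in
lemma sum_filter_perm {k : ℕ} (e : Equiv.Perm (Fin k)) (f : Fin k → ℕ) (a : Fin k) :
    ∑ m ∈ filter (fun m => m < a) univ, f (e.symm m)
      = ∑ r ∈ filter (fun r => e r < a) univ, f r := by
  refine (Finset.sum_equiv e ?_ ?_).symm <;> intro i <;> simp

open Finset in
lemma Gam_val {k : ℕ} (σ : Equiv.Perm (Fin k)) (j : Fin k → ℕ)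
    (φ : ∀ i, Equiv.Perm (Fin (j i))) (y : Fin (∑ i, j i)) :
    ((Gam σ j φ y : Fin (∑ i, j i)) : ℕ)
      = ∑ m ∈ filter (fun m => m < σ ((sigmaFin j).symm y).1) univ, j (σ.symm m)
        + (φ ((sigmaFin j).symm y).1 ((sigmaFin j).symm y).2).val := by
  simp [Gam, blockSum, blockPerm, Equiv.sigmaCongr, Equiv.sigmaCongrRight, sigmaFin_val]
open Finset in
lemma sum_split {k : ℕ} (j : Fin k → ℕ) (isz : ∀ s, Fin (j s) → ℕ)
    (σ : Equiv.Perm (Fin k)) (s : Fin k) (C : Fin (∑ i, j i) → Prop) [DecidablePred C]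
    (E : ∀ r, Fin (j r) → Prop) [∀ r, DecidablePred (E r)]
    (hC : ∀ (r : Fin k) (p : Fin (j r)),
      C (sigmaFin j ⟨r, p⟩) ↔ (σ r < σ s ∨ (r = s ∧ E r p))) :
    ∑ u ∈ filter C univ, isz ((sigmaFin j).symm u).1 ((sigmaFin j).symm u).2
      = ∑ r ∈ filter (fun r => σ r < σ s) univ, (∑ q, isz r q)
        + ∑ p ∈ filter (E s) univ, isz s p := by
  rw [Finset.sum_filter, ← Equiv.sum_comp (sigmaFin j)
    (fun u => if C u then isz ((sigmaFin j).symm u).1 ((sigmaFin j).symm u).2 else 0)]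
  rw [← Finset.univ_sigma_univ, Finset.sum_sigma]
  rw [Finset.sum_filter, Finset.sum_filter]
  have hX : (∑ p : Fin (j s), if E s p then isz s p else 0)
      = ∑ r : Fin k, if r = s then (∑ p : Fin (j s), if E s p then isz s p else 0) else 0 := by
    rw [Finset.sum_ite_eq' univ s]
    simp
  rw [hX, ← Finset.sum_add_distrib]
  apply Finset.sum_congr rfl
  intro r _
  by_cases h1 : σ r < σ s
  · have hrs : r ≠ s := by rintro rfl; exact absurd h1 (lt_irrefl _)
    simp only [h1, if_true, hrs, if_false, add_zero]
    apply Finset.sum_congr rfl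
    intro p _
    rw [Equiv.symm_apply_apply]
    simp [hC, h1]
  · by_cases h2 : r = s
    · subst h2
      simp only [h1, if_false, if_true, zero_add]
      apply Finset.sum_congr rfl
      intro p _
      rw [Equiv.symm_apply_apply]
      simp [hC, h1]
    · simp only [h1, if_false, h2, add_zero]
      refine Finset.sum_eq_zero fun p _ => ?_
      simp [hC, h1, h2]
open Finset in
lemma sigmaFin_lt_iff {k : ℕ} (j : Fin k → ℕ) (r s : Fin k) (p : Fin (j r)) (q : Fin (j s)) :
    sigmaFin j ⟨r, p⟩ < sigmaFin j ⟨s, q⟩ ↔ (r < s ∨ (r = s ∧ p.val < q.val)) := by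
  rw [Fin.lt_def, sigmaFin_val, sigmaFin_val]
  exact lex_lt j r s p.val q.val p.isLt q.isLt

open Finset in
lemma Gam_lt_iff {k : ℕ} (σ : Equiv.Perm (Fin k)) (j : Fin k → ℕ)
    (φ : ∀ i, Equiv.Perm (Fin (j i))) (r s : Fin k) (p : Fin (j r)) (q : Fin (j s)) :
    Gam σ j φ (sigmaFin j ⟨r, p⟩) < Gam σ j φ (sigmaFin j ⟨s, q⟩)
      ↔ (σ r < σ s ∨ (r = s ∧ (φ r p).val < (φ s q).val)) := by
  rw [Fin.lt_def, Gam_val, Gam_val, Equiv.symm_apply_apply, Equiv.symm_apply_apply]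
  have h := lex_lt (fun m => j (σ.symm m)) (σ r) (σ s) (φ r p).val (φ s q).val
    (by simpa using (φ r p).isLt) (by simpa using (φ s q).isLt)
  simp only [Equiv.apply_eq_iff_eq] at h
  simpa using h
open Finset in
lemma Gam_val' {k : ℕ} (σ : Equiv.Perm (Fin k)) (j : Fin k → ℕ)
    (φ : ∀ i, Equiv.Perm (Fin (j i))) (x : Σ i, Fin (j i)) :
    ((Gam σ j φ (sigmaFin j x) : Fin (∑ i, j i)) : ℕ)
      = ∑ m ∈ filter (fun m => m < σ x.1) univ, j (σ.symm m) + (φ x.1 x.2).val := by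
  rw [Gam_val]
  have hv : (sigmaFin j).symm (sigmaFin j x) = x := Equiv.symm_apply_apply _ _
  rw [hv]

/-- Multiassociativity of the multiproduct `Γ` of the associative operad `Σ_*`:
`Γ(Γ(σ; φ₁,…,φ_k); ψ_{1,1},…,ψ_{k,j_k}) = Γ(σ; Γ(φ₁; ψ_{1,•}),…,Γ(φ_k; ψ_{k,•}))`,
where on the left the `ψ`'s are listed in lexicographic order of `(s,q)`
(i.e. indexed by `Fin (∑ s, j s)` via the lexicographic identification `sigmaFin`). -/
theorem sigmaStar_multiassoc {k : ℕ} (σ : Equiv.Perm (Fin k)) (j : Fin k → ℕ)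
    (φ : ∀ s, Equiv.Perm (Fin (j s))) (isz : ∀ s, Fin (j s) → ℕ)
    (ψ : ∀ s q, Equiv.Perm (Fin (isz s q))) :
    ((finCongr (show (∑ t : Fin (∑ s, j s), isz ((sigmaFin j).symm t).1 ((sigmaFin j).symm t).2)
            = ∑ s, ∑ q, isz s q by
          rw [Equiv.sum_comp ((sigmaFin j).symm) (fun x : Σ s, Fin (j s) => isz x.1 x.2),
            ← Finset.univ_sigma_univ, Finset.sum_sigma])).symm.trans
        ((Gam (Gam σ j φ)
            (fun t => isz ((sigmaFin j).symm t).1 ((sigmaFin j).symm t).2)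
            (fun t => ψ ((sigmaFin j).symm t).1 ((sigmaFin j).symm t).2)).trans
          (finCongr (show (∑ t : Fin (∑ s, j s), isz ((sigmaFin j).symm t).1 ((sigmaFin j).symm t).2)
            = ∑ s, ∑ q, isz s q by
          rw [Equiv.sum_comp ((sigmaFin j).symm) (fun x : Σ s, Fin (j s) => isz x.1 x.2),
            ← Finset.univ_sigma_univ, Finset.sum_sigma])))) =
      Gam σ (fun s => ∑ q, isz s q) (fun s => Gam (φ s) (isz s) (ψ s)) := by
  apply Equiv.ext
  intro y
  apply Fin.val_injective
  simp only [Equiv.trans_apply, finCongr_apply, Fin.coe_cast, finCongr_symm]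
  obtain ⟨⟨s, w⟩, rfl⟩ : ∃ v, (sigmaFin (fun s => ∑ q, isz s q)) v = y :=
    ⟨_, Equiv.apply_symm_apply _ _⟩
  obtain ⟨⟨q, z⟩, rfl⟩ : ∃ v, (sigmaFin (isz s)) v = w :=
    ⟨_, Equiv.apply_symm_apply _ _⟩
  have hiz : isz s q = isz ((sigmaFin j).symm (sigmaFin j ⟨s, q⟩)).1
      ((sigmaFin j).symm (sigmaFin j ⟨s, q⟩)).2 := by
    rw [Equiv.symm_apply_apply]
  -- the decomposition of the recast argument in the composite sizes
  have h3 : ∀ (h : (∑ s, ∑ q, isz s q)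
        = ∑ t : Fin (∑ s, j s), isz ((sigmaFin j).symm t).1 ((sigmaFin j).symm t).2),
      Fin.cast h (sigmaFin (fun s => ∑ q, isz s q) ⟨s, sigmaFin (isz s) ⟨q, z⟩⟩)
        = sigmaFin (fun t => isz ((sigmaFin j).symm t).1 ((sigmaFin j).symm t).2)
          ⟨sigmaFin j ⟨s, q⟩, Fin.cast hiz z⟩ := by
    intro h
    apply Fin.val_injective
    have SA := sum_split j isz 1 s (fun u => u < sigmaFin j ⟨s, q⟩)
      (fun r p => p.val < q.val) (by intro r p; simpa using sigmaFin_lt_iff j r s p q)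
    simp only [Equiv.Perm.coe_one, id_eq] at SA
    simp only [Fin.coe_cast, sigmaFin_val]
    simp only [Fin.lt_def] at SA ⊢
    omega
  rw [h3]
  -- expand all Gam applications
  simp only [Gam_val']
  -- identify the innermost permutation values
  have hpsi : ((ψ ((sigmaFin j).symm (sigmaFin j ⟨s, q⟩)).1 ((sigmaFin j).symm (sigmaFin j ⟨s, q⟩)).2
        (Fin.cast hiz z) : Fin _) : ℕ) = ((ψ s q z : Fin _) : ℕ) := by
    have key : ∀ (v : Σ r, Fin (j r)) (_ : v = ⟨s, q⟩) (x : Fin (isz v.1 v.2)),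
        (x : ℕ) = (z : ℕ) → ((ψ v.1 v.2 x : Fin _) : ℕ) = ((ψ s q z : Fin _) : ℕ) := by
      rintro v rfl x hx
      rw [show x = z from Fin.val_injective hx]
    exact key _ (Equiv.symm_apply_apply _ _) _ (Fin.coe_cast _ _)
  rw [hpsi]
  -- reindex the sums along the permutations
  have S2 := sum_filter_perm (Gam σ j φ)
    (fun u => isz ((sigmaFin j).symm u).1 ((sigmaFin j).symm u).2)
    (Gam σ j φ (sigmaFin j ⟨s, q⟩))
  have S3 := sum_split j isz σ s
    (fun u => Gam σ j φ u < Gam σ j φ (sigmaFin j ⟨s, q⟩))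
    (fun r p => (φ r p).val < (φ s q).val)
    (by intro r p; simpa using Gam_lt_iff σ j φ r s p q)
  have S4 := sum_filter_perm σ (fun r => ∑ p, isz r p) (σ s)
  have S5 := sum_filter_perm (φ s) (isz s) (φ s q)
  simp only [S2, S3, S4, S5]
  simp only [Fin.lt_def]
  omega
end
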